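/- arXiv:2509.14614 — 2 statements merged into one kernel-verified Lean document; each statement's English description precedes it below -/
import Mathlib

section
/- If a linear order L admits an order embedding into the ω₁-lengthened rational line U, then L condenses to 1 under the countable condensation: for all x y : L, the interval Set.uIcc x y is countable. -/
/-!
Every initial segment of `ω₁` is countable, hence so is every initial segment of
`D = ω₁ ×ₗ (1 ⊕ ℚ)` and of `ℚ ⊕ₗ D`, while every final segment of `Dᵒᵈ` is countable.
A closed interval of `U = Dᵒᵈ ⊕ₗ (ℚ ⊕ₗ D)` is covered by a final segment of the left summand
and an initial segment of the right one, so it is countable, and an order embedding pulls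
this back to `L`.
-/

/-- The canonical linear order of order type `ω₁`. -/
noncomputable abbrev Omega1 : Type := (Cardinal.aleph 1).ord.ToType

/-- `ω₁` consecutive blocks, each consisting of one point followed by a copy of `ℚ`. -/
noncomputable abbrev Dline : Type := Lex (Omega1 × (PUnit ⊕ₗ ℚ))

/-- The `ω₁`-lengthened rational line `U`. -/
noncomputable abbrev Uline : Type := (OrderDual Dline) ⊕ₗ (ℚ ⊕ₗ Dline)

open Set

instance Lex.instCountable {α : Type*} [Countable α] : Countable (Lex α) := ‹Countable α›

theorem Omega1.countable_Iic (i : Omega1) : (Iic i).Countable := by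
  have hIio : (Iio i).Countable := by
    rw [← Cardinal.le_aleph0_iff_set_countable, ← Cardinal.lt_aleph_one_iff]
    simpa using Cardinal.mk_Iio_lt i
  rw [← Iio_insert]
  exact hIio.insert i

namespace Prod.Lex

variable {α β : Type*} [Preorder α] [Preorder β] [Countable β]

theorem countable_Iic (hα : ∀ a : α, (Iic a).Countable) (x : α ×ₗ β) : (Iic x).Countable := by
  refine (((hα (ofLex x).1).prod countable_univ).image toLex).mono fun y hy => ?_
  exact ⟨ofLex y, ⟨monotone_fst _ _ hy, mem_univ _⟩, rfl⟩

end Prod.Lex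

namespace Sum.Lex

variable {α β : Type*} [Preorder α] [Preorder β]

theorem countable_preimage_inl_Ici (hα : ∀ a : α, (Ici a).Countable) (x : α ⊕ₗ β) :
    (inlₗ ⁻¹' Ici x).Countable := by
  rcases x with a | b
  · exact (hα a).mono fun _ h => inl_le_inl_iff.mp h
  · exact countable_empty.mono fun _ h => not_inr_le_inl h

theorem countable_preimage_inr_Iic (hβ : ∀ b : β, (Iic b).Countable) (x : α ⊕ₗ β) :
    (inrₗ ⁻¹' Iic x).Countable := by
  rcases x with a | b
  · exact countable_empty.mono fun _ h => not_inr_le_inl h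
  · exact (hβ b).mono fun _ h => inr_le_inr_iff.mp h

theorem countable_Iic [Countable α] (hβ : ∀ b : β, (Iic b).Countable) (x : α ⊕ₗ β) :
    (Iic x).Countable := by
  refine ((countable_range inlₗ).union ((countable_preimage_inr_Iic hβ x).image inrₗ)).mono ?_
  rintro (a | b) hy
  exacts [Or.inl ⟨a, rfl⟩, Or.inr ⟨b, hy, rfl⟩]

theorem countable_Icc (hα : ∀ a : α, (Ici a).Countable) (hβ : ∀ b : β, (Iic b).Countable)
    (x y : α ⊕ₗ β) : (Icc x y).Countable := by
  refine (((countable_preimage_inl_Ici hα x).image inlₗ).union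
    ((countable_preimage_inr_Iic hβ y).image inrₗ)).mono ?_
  rintro (a | b) hz
  exacts [Or.inl ⟨a, hz.1, rfl⟩, Or.inr ⟨b, hz.2, rfl⟩]

end Sum.Lex

theorem OrderEmbedding.countable_uIcc {α β : Type*} [LinearOrder α] [Lattice β] (f : α ↪o β)
    (hβ : ∀ a b : β, (Icc a b).Countable) (x y : α) : (uIcc x y).Countable := by
  rw [← f.preimage_uIcc]
  exact (hβ _ _).preimage f.injective

theorem Dline.countable_Iic (x : Dline) : (Iic x).Countable :=
  Prod.Lex.countable_Iic Omega1.countable_Iic x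

theorem Uline.countable_Icc (x y : Uline) : (Icc x y).Countable :=
  Sum.Lex.countable_Icc (fun a => Dline.countable_Iic (OrderDual.ofDual a))
    (Sum.Lex.countable_Iic Dline.countable_Iic) x y

/-- If a linear order `L` order-embeds into the `ω₁`-lengthened rational
line `U`, then `L` condenses to `1` under the countable condensation. -/
theorem condenses_to_one_of_embeds_into_Uline
    {L : Type*} [LinearOrder L] (f : L ↪o Uline) :
    ∀ x y : L, (Set.uIcc x y).Countable :=
  f.countable_uIcc Uline.countable_Icc
end

section
/- If L is a nonempty linear order that condenses to 1 under the countable condensation, then L has a cofinal subset of cardinality at most ℵ₁ and a coinitial subset (cofinal in the dual order) of cardinality at most ℵ₁; that is, cf(L) ≤ ω₁ and cf*(L) ≤ ω₁. -/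
/-!
Every linear order has a well-ordered cofinal subset `S` (the records of a well-ordering).
Each proper initial segment of `S` lies in an interval `[min S, y]`, hence is countable when `L`
condenses to `1`, and a well-order whose proper initial segments are all countable has order
type at most `ω₁`. Applying this to `Lᵒᵈ` gives the coinitial subset.
-/

open Cardinal Set

theorem exists_isCofinal_wellFoundedLT (α : Type*) [LinearOrder α] :
    ∃ s : Set α, IsCofinal s ∧ WellFoundedLT s := by
  let r : α → α → Prop := WellOrderingRel
  refine ⟨{a | ∀ b, r b a → b < a}, isCofinal_setOfPred_imp_lt r, ⟨?_⟩⟩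
  -- On the records of `r`, the order `<` is contained in `r`.
  refine Subrelation.wf (fun {a b} hab => ?_) (InvImage.wf Subtype.val (IsWellFounded.wf (r := r)))
  rcases trichotomous_of r a.1 b.1 with hr | he | hr
  · exact hr
  · exact absurd he (Subtype.coe_ne_coe.mpr hab.ne)
  · exact absurd hab (a.2 _ hr).asymm

theorem mk_le_aleph_one_of_countable_Iio {α : Type*} [LinearOrder α] [WellFoundedLT α]
    (h : ∀ a : α, (Iio a).Countable) : #α ≤ ℵ₁ := by
  by_contra! hlt
  have hlt_type : ord ℵ₁ < Ordinal.type (α := α) (· < ·) :=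
    (ord_lt_ord.mpr hlt).trans_le (ord_le_type _)
  obtain ⟨a, ha⟩ := Ordinal.typein_surj (· < ·) hlt_type
  have hmk : #(Iio a) = ℵ₁ := by
    rw [← card_ord ℵ₁, ← ha]
    rfl
  exact aleph0_lt_aleph_one.not_ge (hmk ▸ le_aleph0_iff_set_countable.mpr (h a))

theorem mk_le_aleph_one_of_countable_Icc {L : Type*} [LinearOrder L]
    (h : ∀ x y : L, (Icc x y).Countable) (s : Set L) [WellFoundedLT s] : #s ≤ ℵ₁ := by
  refine mk_le_aleph_one_of_countable_Iio fun y => ?_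
  let m : s := wellFounded_lt.min univ ⟨y, trivial⟩
  exact ((h m y).preimage Subtype.val_injective).mono fun x hx =>
    mem_Icc.mpr ⟨wellFounded_lt.min_le (mem_univ x), le_of_lt hx⟩

theorem Order.cof_le_aleph_one_of_countable_Icc {L : Type*} [LinearOrder L]
    (h : ∀ x y : L, (Icc x y).Countable) : Order.cof L ≤ ℵ₁ := by
  obtain ⟨s, hs, _⟩ := exists_isCofinal_wellFoundedLT L
  exact (Order.cof_le hs).trans (mk_le_aleph_one_of_countable_Icc h s)

theorem cofinality_le_aleph1_of_condenses_to_one_general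
    {L : Type*} [LinearOrder L]
    (h : ∀ x y : L, (Set.uIcc x y).Countable) :
    (∃ S : Set L, (∀ l : L, ∃ s ∈ S, l ≤ s) ∧ Cardinal.mk S ≤ Cardinal.aleph 1) ∧
      (∃ S : Set L, (∀ l : L, ∃ s ∈ S, s ≤ l) ∧ Cardinal.mk S ≤ Cardinal.aleph 1) := by
  have hIcc : ∀ x y : L, (Icc x y).Countable := fun x y => (h x y).mono Icc_subset_uIcc
  have hIcc_dual : ∀ x y : Lᵒᵈ, (Icc x y).Countable := fun x y =>
    ((hIcc y.ofDual x.ofDual).preimage OrderDual.ofDual.injective).mono fun _ => And.symm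
  obtain ⟨S, hS, hSmk⟩ := Order.exists_cof_eq L
  obtain ⟨T, hT, hTmk⟩ := Order.exists_cof_eq Lᵒᵈ
  exact ⟨⟨S, hS, hSmk ▸ Order.cof_le_aleph_one_of_countable_Icc hIcc⟩,
    ⟨T, hT, hTmk ▸ Order.cof_le_aleph_one_of_countable_Icc hIcc_dual⟩⟩

/-- A nonempty linear order that condenses to `1` under the countable
condensation has a cofinal subset of cardinality at most `ℵ₁` and a coinitial subset of
cardinality at most `ℵ₁`; that is, `cf(L) ≤ ω₁` and `cf*(L) ≤ ω₁`. -/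
theorem cofinality_le_aleph1_of_condenses_to_one
    {L : Type*} [LinearOrder L] [Nonempty L]
    (h : ∀ x y : L, (Set.uIcc x y).Countable) :
    (∃ S : Set L, (∀ l : L, ∃ s ∈ S, l ≤ s) ∧ Cardinal.mk S ≤ Cardinal.aleph 1) ∧
      (∃ S : Set L, (∀ l : L, ∃ s ∈ S, s ≤ l) ∧ Cardinal.mk S ≤ Cardinal.aleph 1) :=
  cofinality_le_aleph1_of_condenses_to_one_general h
end
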